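/- arXiv:1712.00463 — 5 statements merged into one kernel-verified Lean document; each statement's English description precedes it below -/
import Mathlib

section
/- Let r ∈ ℝ, μ > r, σ > 0, α > 0, T > 0 and set θ := (μ − r)/σ. Define V : [0,T] × ℝ → ℝ by V(t,x) = −exp(−α x e^{r(T−t)} − (θ²/2)(T−t)). Then for every t ∈ [0,T] and x ∈ ℝ: (i) the second partial derivative ∂²V/∂x²(t,x) = −α² e^{2r(T−t)} exp(−α x e^{r(T−t)} − (θ²/2)(T−t)) is strictly negative; (ii) V(T,x) = −e^{−αx}; and (iii) V satisfies the reduced Hamilton–Jacobi–Bellman equation ∂V/∂t(t,x) + r x ∂V/∂x(t,x) − (θ²/2)·(∂V/∂x(t,x))²/(∂²V/∂x²(t,x)) = 0. -/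
open Real

/-!
Every partial derivative of `V = -exp(-α x e^{r(T-t)} - (θ²/2)(T-t))` is a multiple of `V` itself:
with `A = e^{r(T-t)}`, `∂ₓV = -αA·V`, `∂ₓₓV = (αA)²·V` and `∂ₜV = (α x r A + θ²/2)·V`.
Since `V < 0`, `∂ₓₓV < 0`, and the ratio `(∂ₓV)²/∂ₓₓV = V` turns the HJB expression into
`(α x r A + θ²/2 - r x α A - θ²/2)·V = 0`.
-/

noncomputable def caraValue (α r θ T t x : ℝ) : ℝ :=
  -exp (-(α * x * exp (r * (T - t))) - θ ^ 2 / 2 * (T - t))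

section caraValue

variable (α r θ T : ℝ)

theorem caraValue_neg (t x : ℝ) : caraValue α r θ T t x < 0 :=
  neg_neg_of_pos (exp_pos _)

theorem caraValue_terminal (x : ℝ) : caraValue α r θ T T x = -exp (-(α * x)) := by
  simp [caraValue]

theorem hasDerivAt_caraValue_space (t x : ℝ) :
    HasDerivAt (caraValue α r θ T t)
      (-(α * exp (r * (T - t))) * caraValue α r θ T t x) x := by
  have hexponent : HasDerivAt (fun y => -(α * y * exp (r * (T - t))) - θ ^ 2 / 2 * (T - t))
      (-(α * exp (r * (T - t)))) x := by
    simpa using (((hasDerivAt_id x).const_mul α).mul_const (exp (r * (T - t)))).neg.sub_const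
      (θ ^ 2 / 2 * (T - t))
  exact hexponent.exp.neg.congr_deriv (by rw [caraValue]; ring)

theorem deriv_caraValue_space (t : ℝ) :
    deriv (caraValue α r θ T t) = fun x => -(α * exp (r * (T - t))) * caraValue α r θ T t x :=
  funext fun x => (hasDerivAt_caraValue_space α r θ T t x).deriv

theorem deriv_deriv_caraValue_space (t x : ℝ) :
    deriv (deriv (caraValue α r θ T t)) x
      = (α * exp (r * (T - t))) ^ 2 * caraValue α r θ T t x := by
  rw [deriv_caraValue_space, ((hasDerivAt_caraValue_space α r θ T t x).const_mul _).deriv]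
  ring

theorem hasDerivAt_caraValue_time (t x : ℝ) :
    HasDerivAt (fun s => caraValue α r θ T s x)
      ((α * x * r * exp (r * (T - t)) + θ ^ 2 / 2) * caraValue α r θ T t x) t := by
  have hdiscount : HasDerivAt (fun s => exp (r * (T - s))) (exp (r * (T - t)) * -r) t := by
    simpa using (((hasDerivAt_id t).const_sub T).const_mul r).exp
  have hexponent : HasDerivAt (fun s => -(α * x * exp (r * (T - s))) - θ ^ 2 / 2 * (T - s))
      (α * x * r * exp (r * (T - t)) + θ ^ 2 / 2) t :=
    ((hdiscount.const_mul (α * x)).neg.sub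
      (((hasDerivAt_id t).const_sub T).const_mul (θ ^ 2 / 2))).congr_deriv (by ring)
  exact hexponent.exp.neg.congr_deriv (by rw [caraValue]; ring)

end caraValue

theorem stmt_0_general (r α T : ℝ) (hα : 0 < α)
    (θ : ℝ)
    (V : ℝ → ℝ → ℝ)
    (hV : ∀ t x, V t x = -Real.exp (-(α * x * Real.exp (r * (T - t))) - θ ^ 2 / 2 * (T - t))) :
    ∀ t ∈ Set.Icc (0 : ℝ) T, ∀ x : ℝ,
      ((deriv (deriv (fun x' => V t x')) x
          = -(α ^ 2) * Real.exp (2 * r * (T - t))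
              * Real.exp (-(α * x * Real.exp (r * (T - t))) - θ ^ 2 / 2 * (T - t))
        ∧ deriv (deriv (fun x' => V t x')) x < 0)
      ∧ V T x = -Real.exp (-(α * x))
      ∧ deriv (fun t' => V t' x) t + r * x * deriv (fun x' => V t x') x
          - θ ^ 2 / 2 * (deriv (fun x' => V t x') x) ^ 2
              / deriv (deriv (fun x' => V t x')) x = 0) := by
  obtain rfl : V = caraValue α r θ T := funext fun t => funext (hV t)
  intro t _ x
  have hV_neg := caraValue_neg α r θ T t x
  have hαA : 0 < α * exp (r * (T - t)) := mul_pos hα (exp_pos _)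
  have hsq : exp (2 * r * (T - t)) = exp (r * (T - t)) ^ 2 := by
    rw [sq, ← exp_add]; ring_nf
  rw [deriv_deriv_caraValue_space, deriv_caraValue_space,
    (hasDerivAt_caraValue_time α r θ T t x).deriv, caraValue_terminal]
  refine ⟨⟨?_, mul_neg_of_pos_of_neg (pow_pos hαA 2) hV_neg⟩, rfl, ?_⟩
  · rw [hsq, caraValue]; ring
  · field_simp
    ring

/-- The candidate value function `V(t,x) = -exp(-α x e^{r(T-t)} - (θ²/2)(T-t))` solves the
reduced Hamilton–Jacobi–Bellman equation, has strictly negative second space derivative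
(given explicitly), and satisfies the terminal condition `V(T,x) = -e^{-αx}`. -/
theorem stmt_0 (r μ σ α T : ℝ) (hμ : r < μ) (hσ : 0 < σ) (hα : 0 < α) (hT : 0 < T)
    (θ : ℝ) (hθ : θ = (μ - r) / σ)
    (V : ℝ → ℝ → ℝ)
    (hV : ∀ t x, V t x = -Real.exp (-(α * x * Real.exp (r * (T - t))) - θ ^ 2 / 2 * (T - t))) :
    ∀ t ∈ Set.Icc (0 : ℝ) T, ∀ x : ℝ,
      ((deriv (deriv (fun x' => V t x')) x
          = -(α ^ 2) * Real.exp (2 * r * (T - t))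
              * Real.exp (-(α * x * Real.exp (r * (T - t))) - θ ^ 2 / 2 * (T - t))
        ∧ deriv (deriv (fun x' => V t x')) x < 0)
      ∧ V T x = -Real.exp (-(α * x))
      ∧ deriv (fun t' => V t' x) t + r * x * deriv (fun x' => V t x') x
          - θ ^ 2 / 2 * (deriv (fun x' => V t x') x) ^ 2
              / deriv (deriv (fun x' => V t x')) x = 0) :=
  stmt_0_general r α T hα θ V hV
end

section
/- Let r ∈ ℝ, μ > r, σ > 0, α > 0, T > 0, θ := (μ − r)/σ, and V(t,x) = −exp(−α x e^{r(T−t)} − (θ²/2)(T−t)). Fix t ∈ [0,T] and x > 0. Then the quadratic function f(π) := (r x + (μ − r) π x)·∂V/∂x(t,x) + (1/2) σ² π² x² · ∂²V/∂x²(t,x) attains its maximum over π ∈ ℝ at the unique point π̂ = (θ/(x α σ)) e^{−r(T−t)}, and ∂V/∂t(t,x) + f(π̂) = 0. -/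
open Real

/-! The HJB expression is a concave quadratic in the control `p`, because `∂²V/∂x² < 0`; its
vertex `-(μ - r) V_x / (σ² x V_xx)` is `phat`, since `V_x / V_xx = -1 / (α e^{r(T-t)})`.
At the vertex the maximal value is `r x V_x - (θ²/2) V`, which `V_t` cancels exactly. -/

theorem quadratic_lt_vertex {a b c p : ℝ} (ha : a < 0) (hp : p ≠ -b / (2 * a)) :
    a * p ^ 2 + b * p + c < a * (-b / (2 * a)) ^ 2 + b * (-b / (2 * a)) + c := by
  have hsq : 0 < (p - -b / (2 * a)) ^ 2 := by
    have : p - -b / (2 * a) ≠ 0 := sub_ne_zero.mpr hp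
    positivity
  have hgap : a * (-b / (2 * a)) ^ 2 + b * (-b / (2 * a)) + c - (a * p ^ 2 + b * p + c)
      = -a * (p - -b / (2 * a)) ^ 2 := by
    field_simp [ha.ne]
    ring
  nlinarith [mul_pos (neg_pos.mpr ha) hsq]

section ExponentialUtility

variable (k c B : ℝ)

theorem hasDerivAt_neg_exp_linear (y : ℝ) :
    HasDerivAt (fun y => -exp (-(k * y * c) - B)) (k * c * exp (-(k * y * c) - B)) y := by
  have hlin : HasDerivAt (fun y : ℝ => -(k * y * c) - B) (-(k * c)) y := by
    simpa using (((hasDerivAt_id y).const_mul k).mul_const c).neg.sub_const B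
  exact hlin.exp.neg.congr_deriv (by ring)

theorem deriv_neg_exp_linear :
    deriv (fun y => -exp (-(k * y * c) - B)) = fun y => k * c * exp (-(k * y * c) - B) :=
  funext fun y => (hasDerivAt_neg_exp_linear k c B y).deriv

theorem deriv_deriv_neg_exp_linear (y : ℝ) :
    deriv (deriv fun y => -exp (-(k * y * c) - B)) y = -(k * c) ^ 2 * exp (-(k * y * c) - B) := by
  rw [deriv_neg_exp_linear, show (fun y => k * c * exp (-(k * y * c) - B))
    = fun y => -(k * c) * -exp (-(k * y * c) - B) by funext; ring]
  rw [((hasDerivAt_neg_exp_linear k c B y).const_mul (-(k * c))).deriv]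
  ring

end ExponentialUtility

theorem hasDerivAt_exponential_value_time (α x r T θ t : ℝ) :
    HasDerivAt (fun t => -exp (-(α * x * exp (r * (T - t))) - θ ^ 2 / 2 * (T - t)))
      (-exp (-(α * x * exp (r * (T - t))) - θ ^ 2 / 2 * (T - t))
        * (α * x * r * exp (r * (T - t)) + θ ^ 2 / 2)) t := by
  have hdisc : HasDerivAt (fun t : ℝ => r * (T - t)) (-r) t := by
    simpa using ((hasDerivAt_id t).const_sub T).const_mul r
  have hdrift : HasDerivAt (fun t : ℝ => θ ^ 2 / 2 * (T - t)) (-(θ ^ 2 / 2)) t := by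
    simpa using ((hasDerivAt_id t).const_sub T).const_mul (θ ^ 2 / 2)
  have hexponent : HasDerivAt (fun t => -(α * x * exp (r * (T - t))) - θ ^ 2 / 2 * (T - t))
      (α * x * r * exp (r * (T - t)) + θ ^ 2 / 2) t :=
    ((hdisc.exp.const_mul (α * x)).neg.sub hdrift).congr_deriv (by ring)
  exact hexponent.exp.neg.congr_deriv (by ring)

theorem stmt_1_general (r μ σ α T : ℝ) (hσ : 0 < σ) (hα : 0 < α)
    (θ : ℝ) (hθ : θ = (μ - r) / σ)
    (V : ℝ → ℝ → ℝ)
    (hV : ∀ t x, V t x = -Real.exp (-(α * x * Real.exp (r * (T - t))) - θ ^ 2 / 2 * (T - t)))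
    (t : ℝ) (x : ℝ) (hx : 0 < x)
    (f : ℝ → ℝ)
    (hf : ∀ p : ℝ, f p = (r * x + (μ - r) * p * x) * deriv (fun x' => V t x') x
        + 1 / 2 * σ ^ 2 * p ^ 2 * x ^ 2 * deriv (deriv (fun x' => V t x')) x)
    (phat : ℝ) (hphat : phat = θ / (x * α * σ) * Real.exp (-(r * (T - t)))) :
    (∀ p : ℝ, p ≠ phat → f p < f phat)
    ∧ deriv (fun t' => V t' x) t + f phat = 0 := by
  set c := exp (r * (T - t))
  set E := exp (-(α * x * c) - θ ^ 2 / 2 * (T - t))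
  have hc : 0 < c := exp_pos _
  have hc_inv : exp (-(r * (T - t))) = c⁻¹ := exp_neg _
  have hE : 0 < E := exp_pos _
  have hVx : (fun x' => V t x') = fun x' => -exp (-(α * x' * c) - θ ^ 2 / 2 * (T - t)) :=
    funext fun x' => hV t x'
  have hVt : deriv (fun t' => V t' x) t = -E * (α * x * r * c + θ ^ 2 / 2) := by
    rw [show (fun t' => V t' x) = _ from funext fun t' => hV t' x]
    exact (hasDerivAt_exponential_value_time α x r T θ t).deriv
  have hf_quad : ∀ p, f p = -(σ ^ 2 * x ^ 2 * (α * c) ^ 2 * E / 2) * p ^ 2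
      + (μ - r) * x * α * c * E * p + r * x * α * c * E := by
    intro p
    rw [hf, hVx, deriv_deriv_neg_exp_linear, deriv_neg_exp_linear]
    ring
  have hvertex :
      phat = -((μ - r) * x * α * c * E) / (2 * -(σ ^ 2 * x ^ 2 * (α * c) ^ 2 * E / 2)) := by
    rw [hphat, hθ, hc_inv]
    field_simp
  refine ⟨fun p hp => ?_, ?_⟩
  · rw [hf_quad, hf_quad, hvertex]
    exact quadratic_lt_vertex (by simp only [neg_lt_zero]; positivity) (hvertex ▸ hp)
  · rw [hVt, hf_quad, hphat, hθ, hc_inv]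
    field_simp
    ring

/-- The quadratic expression inside the supremum of the HJB equation, evaluated at the candidate
value function `V(t,x) = -exp(-α x e^{r(T-t)} - (θ²/2)(T-t))`, attains its maximum over `p ∈ ℝ`
at the unique point `phat = (θ/(xασ)) e^{-r(T-t)}`, and `∂V/∂t(t,x) + f(phat) = 0`. -/
theorem stmt_1 (r μ σ α T : ℝ) (hμ : r < μ) (hσ : 0 < σ) (hα : 0 < α) (hT : 0 < T)
    (θ : ℝ) (hθ : θ = (μ - r) / σ)
    (V : ℝ → ℝ → ℝ)
    (hV : ∀ t x, V t x = -Real.exp (-(α * x * Real.exp (r * (T - t))) - θ ^ 2 / 2 * (T - t)))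
    (t : ℝ) (ht : t ∈ Set.Icc (0 : ℝ) T) (x : ℝ) (hx : 0 < x)
    (f : ℝ → ℝ)
    (hf : ∀ p : ℝ, f p = (r * x + (μ - r) * p * x) * deriv (fun x' => V t x') x
        + 1 / 2 * σ ^ 2 * p ^ 2 * x ^ 2 * deriv (deriv (fun x' => V t x')) x)
    (phat : ℝ) (hphat : phat = θ / (x * α * σ) * Real.exp (-(r * (T - t)))) :
    (∀ p : ℝ, p ≠ phat → f p < f phat)
    ∧ deriv (fun t' => V t' x) t + f phat = 0 :=
  stmt_1_general r μ σ α T hσ hα θ hθ V hV t x hx f hf phat hphat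
end

section
/- Let (Ω, F, P) be a probability space, H : Ω → ℝ measurable with H ≥ 0 almost surely, y > 0, K_u ∈ ℝ, and let U : ℝ → ℝ be concave and differentiable. Let I : (0,∞) → ℝ satisfy U'(I(y·H(ω))) = y·H(ω) for almost every ω, and define X̂(ω) := min(K_u, I(y·H(ω))). Suppose X : Ω → ℝ is measurable with X ≤ K_u almost surely, the functions U∘X, U∘X̂, H·X and H·X̂ are integrable, and the budget constraint E[H·X] = E[H·X̂] holds. Then E[U(X)] ≤ E[U(X̂)]. -/
open MeasureTheory Real

lemma tangent_line (U : ℝ → ℝ) (hUconc : ConcaveOn ℝ Set.univ U)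
    (hUdiff : Differentiable ℝ U) (a b : ℝ) :
    U a - U b ≤ deriv U b * (a - b) := by
  rcases lt_trichotomy a b with h | h | h
  · have hs := hUconc.deriv_le_slope (Set.mem_univ a) (Set.mem_univ b) h (hUdiff b)
    rw [slope_def_field] at hs
    nlinarith [(le_div_iff₀ (by linarith : (0:ℝ) < b - a)).mp hs]
  · simp [h]
  · have hs := hUconc.slope_le_deriv (Set.mem_univ b) (Set.mem_univ a) h (hUdiff b)
    rw [slope_def_field] at hs
    have : (U a - U b) / (a - b) ≤ deriv U b := hs
    nlinarith [(div_le_iff₀ (by linarith : (0:ℝ) < a - b)).mp this]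

/-- Optimality of the truncated candidate terminal wealth under an upper constraint `K_u`:
if `X̂ = min(K_u, I(yH))` with `U'(I(yH)) = yH` a.e., and `X ≤ K_u` a.e. satisfies the same
budget constraint, then `E[U(X)] ≤ E[U(X̂)]`. -/
theorem stmt_9 {Ω : Type*} [MeasurableSpace Ω] (P : Measure Ω) [IsProbabilityMeasure P]
    (H : Ω → ℝ) (hHmeas : Measurable H) (hHnonneg : ∀ᵐ ω ∂P, 0 ≤ H ω)
    (y : ℝ) (hy : 0 < y) (Ku : ℝ)
    (U : ℝ → ℝ) (hUconc : ConcaveOn ℝ Set.univ U) (hUdiff : Differentiable ℝ U)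
    (I : ℝ → ℝ) (hI : ∀ᵐ ω ∂P, deriv U (I (y * H ω)) = y * H ω)
    (Xhat : Ω → ℝ) (hXhat : ∀ ω, Xhat ω = min Ku (I (y * H ω)))
    (X : Ω → ℝ) (hXmeas : Measurable X) (hXle : ∀ᵐ ω ∂P, X ω ≤ Ku)
    (hint1 : Integrable (fun ω => U (X ω)) P)
    (hint2 : Integrable (fun ω => U (Xhat ω)) P)
    (hint3 : Integrable (fun ω => H ω * X ω) P)
    (hint4 : Integrable (fun ω => H ω * Xhat ω) P)
    (hbudget : ∫ ω, H ω * X ω ∂P = ∫ ω, H ω * Xhat ω ∂P) :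
    ∫ ω, U (X ω) ∂P ≤ ∫ ω, U (Xhat ω) ∂P := by
  have hanti : Antitone (deriv U) := by
    intro s t hst
    exact hUconc.antitoneOn_deriv (fun x _ => hUdiff x) (Set.mem_univ s) (Set.mem_univ t) hst
  have hpt : ∀ᵐ ω ∂P, U (X ω) - U (Xhat ω) ≤ y * (H ω * X ω - H ω * Xhat ω) := by
    filter_upwards [hHnonneg, hI, hXle] with ω hH hIω hX
    have htan := tangent_line U hUconc hUdiff (X ω) (Xhat ω)
    rcases le_total (I (y * H ω)) Ku with hcase | hcase
    · have hx : Xhat ω = I (y * H ω) := by rw [hXhat ω, min_eq_right hcase]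
      rw [hx] at htan ⊢
      rw [hIω] at htan
      nlinarith
    · have hx : Xhat ω = Ku := by rw [hXhat ω, min_eq_left hcase]
      have hd : y * H ω ≤ deriv U Ku := by
        rw [← hIω]; exact hanti hcase
      rw [hx] at htan ⊢
      have hxn : X ω - Ku ≤ 0 := by linarith
      have : deriv U Ku * (X ω - Ku) ≤ y * H ω * (X ω - Ku) :=
        mul_le_mul_of_nonpos_right hd hxn
      nlinarith
  have hsub : ∫ ω, (U (X ω) - U (Xhat ω)) ∂P ≤ ∫ ω, y * (H ω * X ω - H ω * Xhat ω) ∂P :=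
    integral_mono_ae (hint1.sub hint2) ((hint3.sub hint4).const_mul y) hpt
  rw [integral_sub hint1 hint2] at hsub
  have : ∫ ω, y * (H ω * X ω - H ω * Xhat ω) ∂P = 0 := by
    rw [integral_const_mul, integral_sub hint3 hint4, hbudget]; ring
  linarith
end

section
/- Let (Ω, F, P) be a probability space, H : Ω → ℝ measurable with H ≥ 0 almost surely, y > 0, and K_l < K_u real numbers. Let U : ℝ → ℝ be concave and differentiable, and let I : (0,∞) → ℝ satisfy U'(I(y·H(ω))) = y·H(ω) for almost every ω. Define X̂(ω) := min(K_u, max(K_l, I(y·H(ω)))), which equals I(y·H(ω)) + max(K_l − I(y·H(ω)), 0) − max(I(y·H(ω)) − K_u, 0). Suppose X : Ω → ℝ is measurable with K_l ≤ X ≤ K_u almost surely, the functions U∘X, U∘X̂, H·X and H·X̂ are integrable, and E[H·X] = E[H·X̂]. Then E[U(X)] ≤ E[U(X̂)]. -/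
/-!
Concavity gives the tangent bound `U(X) ≤ U(X̂) + U'(X̂)(X - X̂)`. Where `X̂` is truncated at `K_l`,
`X - X̂ ≥ 0` and `U'(K_l) ≤ U'(I(yH)) = yH`; where it is truncated at `K_u`, `X - X̂ ≤ 0` and
`U'(K_u) ≥ yH`; elsewhere `U'(X̂) = yH`. Hence `U(X) ≤ U(X̂) + yH(X - X̂)` almost surely, and the
budget constraint kills the expectation of the last term.
-/

open MeasureTheory Set

lemma min_max_eq_add_max_sub_sub_max {α : Type*} [AddCommGroup α] [LinearOrder α]
    [IsOrderedAddMonoid α] {a b : α} (hab : a ≤ b) (t : α) :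
    min b (max a t) = t + max (a - t) 0 - max (t - b) 0 := by
  rcases le_total t a with hta | hat
  · rw [max_eq_left hta, min_eq_right hab, max_eq_left (sub_nonneg.2 hta),
      max_eq_right (sub_nonpos.2 (hta.trans hab))]
    abel
  rw [max_eq_right hat, max_eq_right (sub_nonpos.2 hat)]
  rcases le_total t b with htb | hbt
  · rw [min_eq_right htb, max_eq_right (sub_nonpos.2 htb)]
    abel
  · rw [min_eq_left hbt, max_eq_left (sub_nonneg.2 hbt)]
    abel

lemma ConcaveOn.le_add_deriv_mul_sub {S : Set ℝ} {f : ℝ → ℝ} (hf : ConcaveOn ℝ S f)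
    {a b : ℝ} (ha : a ∈ S) (hb : b ∈ S) (hfb : DifferentiableAt ℝ f b) :
    f a ≤ f b + deriv f b * (a - b) := by
  rcases lt_trichotomy a b with hab | rfl | hab
  · have := hf.deriv_le_slope ha hb hab hfb
    rw [slope_def_field, le_div_iff₀ (by linarith)] at this
    linarith
  · simp
  · have := hf.slope_le_deriv hb ha hab hfb
    rw [slope_def_field, div_le_iff₀ (by linarith)] at this
    linarith

lemma ConcaveOn.le_min_max_add_deriv_mul_sub {U : ℝ → ℝ} (hU : ConcaveOn ℝ univ U)
    (hUd : Differentiable ℝ U) {Kl Ku x : ℝ} (hx : x ∈ Icc Kl Ku) (t : ℝ) :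
    U x ≤ U (min Ku (max Kl t)) + deriv U t * (x - min Ku (max Kl t)) := by
  have hanti : Antitone (deriv U) := fun a b hab ↦
    hU.antitoneOn_deriv (fun z _ ↦ hUd z) (mem_univ a) (mem_univ b) hab
  have hslope : deriv U (min Ku (max Kl t)) * (x - min Ku (max Kl t))
      ≤ deriv U t * (x - min Ku (max Kl t)) := by
    rcases le_total t Kl with htl | htl
    · rw [max_eq_left htl, min_eq_right (hx.1.trans hx.2)]
      exact mul_le_mul_of_nonneg_right (hanti htl) (by linarith [hx.1])
    rcases le_total Ku t with htu | htu
    · rw [min_eq_left (le_max_of_le_right htu)]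
      exact mul_le_mul_of_nonpos_right (hanti htu) (by linarith [hx.2])
    · rw [max_eq_right htl, min_eq_right htu]
  linarith [hU.le_add_deriv_mul_sub (mem_univ x) (mem_univ _) (hUd (min Ku (max Kl t)))]

lemma integral_le_of_ae_le_add_mul_sub {Ω : Type*} [MeasurableSpace Ω] {μ : Measure Ω}
    {f g h k : Ω → ℝ} (c : ℝ) (hf : Integrable f μ) (hg : Integrable g μ)
    (hh : Integrable h μ) (hk : Integrable k μ)
    (hle : ∀ᵐ ω ∂μ, f ω ≤ g ω + c * (h ω - k ω)) (hhk : ∫ ω, h ω ∂μ = ∫ ω, k ω ∂μ) :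
    ∫ ω, f ω ∂μ ≤ ∫ ω, g ω ∂μ := by
  have hgap : Integrable (fun ω ↦ c * (h ω - k ω)) μ := (hh.sub hk).const_mul c
  calc ∫ ω, f ω ∂μ ≤ ∫ ω, g ω + c * (h ω - k ω) ∂μ := integral_mono_ae hf (hg.add hgap) hle
    _ = ∫ ω, g ω ∂μ := by
      rw [integral_add hg hgap, integral_const_mul, integral_sub hh hk, hhk, sub_self, mul_zero,
        add_zero]

theorem stmt_13_general {Ω : Type*} [MeasurableSpace Ω] (P : Measure Ω)
    (H : Ω → ℝ)
    (y : ℝ) (Kl Ku : ℝ) (hK : Kl < Ku)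
    (U : ℝ → ℝ) (hUconc : ConcaveOn ℝ Set.univ U) (hUdiff : Differentiable ℝ U)
    (I : ℝ → ℝ) (hI : ∀ᵐ ω ∂P, deriv U (I (y * H ω)) = y * H ω)
    (Xhat : Ω → ℝ) (hXhat : ∀ ω, Xhat ω = min Ku (max Kl (I (y * H ω))))
    (X : Ω → ℝ)
    (hXbounds : ∀ᵐ ω ∂P, Kl ≤ X ω ∧ X ω ≤ Ku)
    (hint1 : Integrable (fun ω => U (X ω)) P)
    (hint2 : Integrable (fun ω => U (Xhat ω)) P)
    (hint3 : Integrable (fun ω => H ω * X ω) P)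
    (hint4 : Integrable (fun ω => H ω * Xhat ω) P)
    (hbudget : ∫ ω, H ω * X ω ∂P = ∫ ω, H ω * Xhat ω ∂P) :
    (∀ ω, Xhat ω
        = I (y * H ω) + max (Kl - I (y * H ω)) 0 - max (I (y * H ω) - Ku) 0)
    ∧ ∫ ω, U (X ω) ∂P ≤ ∫ ω, U (Xhat ω) ∂P := by
  refine ⟨fun ω ↦ (hXhat ω).trans (min_max_eq_add_max_sub_sub_max hK.le _), ?_⟩
  refine integral_le_of_ae_le_add_mul_sub y hint1 hint2 hint3 hint4 ?_ hbudget
  filter_upwards [hI, hXbounds] with ω hIω hXω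
  have hpoint := hUconc.le_min_max_add_deriv_mul_sub hUdiff hXω (I (y * H ω))
  rw [← hXhat ω, hIω] at hpoint
  linarith

/-- Optimality of the doubly truncated candidate terminal wealth under a lower constraint `K_l`
and an upper constraint `K_u`: with `X̂ = min(K_u, max(K_l, I(yH)))`, which equals
`I(yH) + max(K_l - I(yH), 0) - max(I(yH) - K_u, 0)`, and `U'(I(yH)) = yH` a.e., any `X` with
`K_l ≤ X ≤ K_u` a.e. satisfying the same budget constraint has `E[U(X)] ≤ E[U(X̂)]`. -/
theorem stmt_13 {Ω : Type*} [MeasurableSpace Ω] (P : Measure Ω) [IsProbabilityMeasure P]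
    (H : Ω → ℝ) (hHmeas : Measurable H) (hHnonneg : ∀ᵐ ω ∂P, 0 ≤ H ω)
    (y : ℝ) (hy : 0 < y) (Kl Ku : ℝ) (hK : Kl < Ku)
    (U : ℝ → ℝ) (hUconc : ConcaveOn ℝ Set.univ U) (hUdiff : Differentiable ℝ U)
    (I : ℝ → ℝ) (hI : ∀ᵐ ω ∂P, deriv U (I (y * H ω)) = y * H ω)
    (Xhat : Ω → ℝ) (hXhat : ∀ ω, Xhat ω = min Ku (max Kl (I (y * H ω))))
    (X : Ω → ℝ) (hXmeas : Measurable X)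
    (hXbounds : ∀ᵐ ω ∂P, Kl ≤ X ω ∧ X ω ≤ Ku)
    (hint1 : Integrable (fun ω => U (X ω)) P)
    (hint2 : Integrable (fun ω => U (Xhat ω)) P)
    (hint3 : Integrable (fun ω => H ω * X ω) P)
    (hint4 : Integrable (fun ω => H ω * Xhat ω) P)
    (hbudget : ∫ ω, H ω * X ω ∂P = ∫ ω, H ω * Xhat ω ∂P) :
    (∀ ω, Xhat ω
        = I (y * H ω) + max (Kl - I (y * H ω)) 0 - max (I (y * H ω) - Ku) 0)
    ∧ ∫ ω, U (X ω) ∂P ≤ ∫ ω, U (Xhat ω) ∂P :=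
  stmt_13_general P H y Kl Ku hK U hUconc hUdiff I hI Xhat hXhat X hXbounds hint1 hint2 hint3 hint4
    hbudget
end

section
/- Let α > 0, X₀ > 0, r ∈ ℝ, μ > r, and let T ≥ 2 be an integer. For σ > 0 and t ∈ ℕ define A_t(σ) := (α σ/(μ − r))·X₀ e^{rT} + ((μ − r)(t+1) − 1)/σ. Then: (i) if μ − r > 1, lim_{σ → 0⁺} ∏_{t=0}^{T−2} Φ(A_t(σ)/√(t+1)) = 1; and (ii) if μ − r < 1/(T−1), lim_{σ → 0⁺} ∏_{t=0}^{T−2} Φ(A_t(σ)/√(t+1)) = 0, where Φ is the standard normal cumulative distribution function. -/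
/-! A factor `Φ((aσ + c/σ)/s)` tends to `1` or `0` as `σ → 0⁺` according to the sign of `c`,
because `c/σ` dominates; the threshold `μ - r < 1/(T-1)` makes the last factor
`t = T - 2` tend to `0`, and all factors lie in `[0, 1]`. -/

open MeasureTheory ProbabilityTheory Filter Topology Finset

/-- The standard normal cumulative distribution function. -/
noncomputable def stdNormalCDF (d : ℝ) : ℝ :=
  ((gaussianReal 0 1) (Set.Iic d)).toReal

lemma stdNormalCDF_eq_cdf (d : ℝ) : stdNormalCDF d = cdf (gaussianReal 0 1) d :=
  (cdf_eq_real _ _).symm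

lemma stdNormalCDF_nonneg (d : ℝ) : 0 ≤ stdNormalCDF d :=
  (stdNormalCDF_eq_cdf d).symm ▸ cdf_nonneg _ _

lemma stdNormalCDF_le_one (d : ℝ) : stdNormalCDF d ≤ 1 :=
  (stdNormalCDF_eq_cdf d).symm ▸ cdf_le_one _ _

lemma tendsto_stdNormalCDF_atTop : Tendsto stdNormalCDF atTop (𝓝 1) :=
  (tendsto_cdf_atTop (gaussianReal 0 1)).congr fun d => (stdNormalCDF_eq_cdf d).symm

lemma tendsto_stdNormalCDF_atBot : Tendsto stdNormalCDF atBot (𝓝 0) :=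
  (tendsto_cdf_atBot (gaussianReal 0 1)).congr fun d => (stdNormalCDF_eq_cdf d).symm

section LimitsAtZero

variable (a : ℝ) {c s : ℝ}

lemma tendsto_const_mul_nhdsGT_zero : Tendsto (fun σ : ℝ => a * σ) (𝓝[>] 0) (𝓝 0) := by
  simpa using ((continuous_const_mul a).tendsto 0).mono_left nhdsWithin_le_nhds

lemma tendsto_mul_add_div_nhdsGT_zero_atTop (hc : 0 < c) :
    Tendsto (fun σ : ℝ => a * σ + c / σ) (𝓝[>] 0) atTop := by
  simpa [div_eq_mul_inv] using
    (tendsto_const_mul_nhdsGT_zero a).add_atTop (tendsto_inv_nhdsGT_zero.const_mul_atTop hc)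

lemma tendsto_mul_add_div_nhdsGT_zero_atBot (hc : c < 0) :
    Tendsto (fun σ : ℝ => a * σ + c / σ) (𝓝[>] 0) atBot := by
  simpa [div_eq_mul_inv] using
    (tendsto_const_mul_nhdsGT_zero a).add_atBot
      (tendsto_inv_nhdsGT_zero.const_mul_atTop_of_neg hc)

lemma tendsto_stdNormalCDF_mul_add_div_nhdsGT_zero_one (hc : 0 < c) (hs : 0 < s) :
    Tendsto (fun σ : ℝ => stdNormalCDF ((a * σ + c / σ) / s)) (𝓝[>] 0) (𝓝 1) :=
  tendsto_stdNormalCDF_atTop.comp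
    ((tendsto_mul_add_div_nhdsGT_zero_atTop a hc).atTop_div_const hs)

lemma tendsto_stdNormalCDF_mul_add_div_nhdsGT_zero_zero (hc : c < 0) (hs : 0 < s) :
    Tendsto (fun σ : ℝ => stdNormalCDF ((a * σ + c / σ) / s)) (𝓝[>] 0) (𝓝 0) :=
  tendsto_stdNormalCDF_atBot.comp
    ((tendsto_mul_add_div_nhdsGT_zero_atBot a hc).atBot_div_const hs)

end LimitsAtZero

lemma tendsto_prod_zero_of_mem_of_tendsto_zero {ι X : Type*} {l : Filter X} {s : Finset ι}
    {f : ι → X → ℝ} (h0 : ∀ i ∈ s, ∀ x, 0 ≤ f i x) (h1 : ∀ i ∈ s, ∀ x, f i x ≤ 1)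
    {i₀ : ι} (hi₀ : i₀ ∈ s) (hf : Tendsto (f i₀) l (𝓝 0)) :
    Tendsto (fun x => ∏ i ∈ s, f i x) l (𝓝 0) := by
  classical
  refine squeeze_zero (fun x => prod_nonneg fun i hi => h0 i hi x) (fun x => ?_) hf
  calc ∏ i ∈ s, f i x = f i₀ x * ∏ i ∈ s.erase i₀, f i x := (mul_prod_erase _ _ hi₀).symm
    _ ≤ f i₀ x * 1 := by
        gcongr
        · exact h0 i₀ hi₀ x
        · exact prod_le_one (fun i hi => h0 i (mem_of_mem_erase hi) x)
            (fun i hi => h1 i (mem_of_mem_erase hi) x)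
    _ = f i₀ x := mul_one _

theorem stmt_19_general (α X₀ r μ : ℝ)
    (T : ℕ) (hT : 2 ≤ T)
    (A : ℝ → ℕ → ℝ)
    (hA : ∀ σ : ℝ, ∀ t : ℕ,
      A σ t = α * σ / (μ - r) * (X₀ * Real.exp (r * T)) + ((μ - r) * (t + 1) - 1) / σ) :
    ((1 : ℝ) < μ - r →
      Tendsto
        (fun σ : ℝ => ∏ t ∈ Finset.range (T - 1),
          stdNormalCDF (A σ t / Real.sqrt (t + 1)))
        (nhdsWithin 0 (Set.Ioi 0)) (nhds 1))
    ∧ (μ - r < 1 / ((T : ℝ) - 1) →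
      Tendsto
        (fun σ : ℝ => ∏ t ∈ Finset.range (T - 1),
          stdNormalCDF (A σ t / Real.sqrt (t + 1)))
        (nhdsWithin 0 (Set.Ioi 0)) (nhds 0)) := by
  set a := α / (μ - r) * (X₀ * Real.exp (r * T))
  have hA' : ∀ σ t, A σ t = a * σ + ((μ - r) * ((t : ℝ) + 1) - 1) / σ := fun σ t => by
    rw [hA]; ring
  have hsqrt (t : ℕ) : 0 < Real.sqrt ((t : ℝ) + 1) := Real.sqrt_pos.mpr (by positivity)
  simp only [hA']
  constructor
  · intro hone
    simpa using tendsto_finsetProd (range (T - 1)) fun t _ =>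
      tendsto_stdNormalCDF_mul_add_div_nhdsGT_zero_one a
        (by nlinarith [(Nat.cast_nonneg t : (0 : ℝ) ≤ t)]) (hsqrt t)
  · intro hsmall
    have hlast : ((T - 2 : ℕ) : ℝ) + 1 = T - 1 := by
      push_cast [Nat.cast_sub hT]; ring
    have hT1 : (0 : ℝ) < T - 1 := by
      have : (2 : ℝ) ≤ T := by exact_mod_cast hT
      linarith
    have hneg : (μ - r) * (((T - 2 : ℕ) : ℝ) + 1) - 1 < 0 := by
      rw [hlast]
      linarith [(lt_div_iff₀ hT1).mp hsmall]
    exact tendsto_prod_zero_of_mem_of_tendsto_zero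
      (fun _ _ _ => stdNormalCDF_nonneg _) (fun _ _ _ => stdNormalCDF_le_one _)
      (mem_range.mpr (by omega : T - 2 < T - 1))
      (tendsto_stdNormalCDF_mul_add_div_nhdsGT_zero_zero a hneg (hsqrt _))

/-- As the volatility `σ` tends to `0` from above, the product
`∏_{t=0}^{T-2} Φ(A_t(σ)/√(t+1))`, with
`A_t(σ) = (ασ/(μ-r))X₀e^{rT} + ((μ-r)(t+1) - 1)/σ`, tends to `1` when `μ - r > 1` and to `0`
when `μ - r < 1/(T-1)`. -/
theorem stmt_19 (α X₀ r μ : ℝ) (hα : 0 < α) (hX₀ : 0 < X₀) (hμ : r < μ)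
    (T : ℕ) (hT : 2 ≤ T)
    (A : ℝ → ℕ → ℝ)
    (hA : ∀ σ : ℝ, ∀ t : ℕ,
      A σ t = α * σ / (μ - r) * (X₀ * Real.exp (r * T)) + ((μ - r) * (t + 1) - 1) / σ) :
    ((1 : ℝ) < μ - r →
      Tendsto
        (fun σ : ℝ => ∏ t ∈ Finset.range (T - 1),
          stdNormalCDF (A σ t / Real.sqrt (t + 1)))
        (nhdsWithin 0 (Set.Ioi 0)) (nhds 1))
    ∧ (μ - r < 1 / ((T : ℝ) - 1) →
      Tendsto
        (fun σ : ℝ => ∏ t ∈ Finset.range (T - 1),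
          stdNormalCDF (A σ t / Real.sqrt (t + 1)))
        (nhdsWithin 0 (Set.Ioi 0)) (nhds 0)) :=
  stmt_19_general α X₀ r μ T hT A hA
end
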